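/- arXiv:1211.5678 — 5 statements merged into one kernel-verified Lean document; each statement's English description precedes it below -/
import Mathlib

section
/- If a collection S of k-element subsets of [ℓ] has the property that F(σ) is nonempty for every σ ∈ S, then S is an independent set of atoms, i.e., for every σ ∈ S, |⋃_{τ∈S∖σ} τ| minus the number of connected components of S∖{σ} is strictly less than |⋃_{τ∈S} τ| minus the number of connected components of S. -/
/-- Two atoms are connected in the hypergraph with edge set `T` if they are linked by a
chain of pairwise-intersecting atoms of `T`. -/
def hconnRel {α : Type*} [DecidableEq α] (T : Finset (Finset α)) (a b : Finset α) : Prop :=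
  Relation.ReflTransGen (fun x y : Finset α => x ∈ T ∧ y ∈ T ∧ (x ∩ y).Nonempty) a b

/-- The number of connected components of the hypergraph with edge set `T`. -/
noncomputable def ncomp {α : Type*} [DecidableEq α] (T : Finset (Finset α)) : ℕ :=
  Set.ncard ((fun σ => {τ | τ ∈ T ∧ hconnRel T σ τ}) '' (T : Set (Finset α)))

/-!
Write `U(T)` for the union of the atoms of `T` and `c(T)` for the number of connected components
of `T`, and put `T = S \ {σ}`. Then `|U(S)| = |F(σ)| + |U(T)|`, while adding the atom `σ` to `T`
creates at most one new component, and none when `σ` meets an atom of `T`. If `σ` meets `T`, the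
codimension therefore grows by at least `|F(σ)| ≥ 1`; otherwise `F(σ) = σ` and it grows by at
least `k - 1 ≥ 1`.
-/

open Relation Finset

variable {α : Type*} [DecidableEq α]

lemma hconnRel.mono {T T' : Finset (Finset α)} (h : T ⊆ T') {a b : Finset α}
    (hab : hconnRel T a b) : hconnRel T' a b :=
  ReflTransGen.mono (fun _ _ hxy => ⟨h hxy.1, h hxy.2.1, hxy.2.2⟩) a b hab

lemma hconnRel.symm {T : Finset (Finset α)} {a b : Finset α} (h : hconnRel T a b) :
    hconnRel T b a := by
  induction h with
  | refl => exact ReflTransGen.refl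
  | tail _ h ih => exact ReflTransGen.head ⟨h.2.1, h.1, by rw [inter_comm]; exact h.2.2⟩ ih

def hcomp (T : Finset (Finset α)) (σ : Finset α) : Set (Finset α) :=
  {τ | τ ∈ T ∧ hconnRel T σ τ}

lemma ncomp_eq_ncard_image_hcomp (T : Finset (Finset α)) :
    ncomp T = (hcomp T '' (T : Set (Finset α))).ncard := rfl

lemma hcomp_eq_of_hconnRel {T : Finset (Finset α)} {a b : Finset α} (h : hconnRel T a b) :
    hcomp T a = hcomp T b := by
  ext x
  exact ⟨fun ⟨hx, hax⟩ => ⟨hx, h.symm.trans hax⟩, fun ⟨hx, hbx⟩ => ⟨hx, h.trans hbx⟩⟩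

/-- Components of a larger hypergraph are unions of components of a smaller one, so the atoms of
the smaller one meet at most `ncomp` of them. -/
lemma ncard_image_hcomp_le_ncomp {T T' : Finset (Finset α)} (h : T ⊆ T') :
    (hcomp T' '' (T : Set (Finset α))).ncard ≤ ncomp T := by
  let saturate (C : Set (Finset α)) : Set (Finset α) := {x | x ∈ T' ∧ ∃ y ∈ C, hconnRel T' y x}
  have hsaturate : ∀ τ ∈ T, saturate (hcomp T τ) = hcomp T' τ := by
    intro τ hτ
    ext x
    exact ⟨fun ⟨hx, _, ⟨_, hτy⟩, hyx⟩ => ⟨hx, (hτy.mono h).trans hyx⟩,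
      fun ⟨hx, hτx⟩ => ⟨hx, τ, ⟨hτ, ReflTransGen.refl⟩, hτx⟩⟩
  have himage :
      hcomp T' '' (T : Set (Finset α)) = saturate '' (hcomp T '' (T : Set (Finset α))) := by
    rw [Set.image_image]
    exact (Set.image_congr fun τ hτ => hsaturate τ hτ).symm
  rw [himage, ncomp_eq_ncard_image_hcomp]
  exact Set.ncard_image_le ((T : Set (Finset α)).toFinite.image _)

lemma image_hcomp_insert (σ : Finset α) (T : Finset (Finset α)) :
    hcomp (insert σ T) '' (insert σ T : Finset (Finset α)) =
      insert (hcomp (insert σ T) σ) (hcomp (insert σ T) '' (T : Set (Finset α))) := by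
  rw [coe_insert, Set.image_insert_eq]

lemma ncomp_insert_le (σ : Finset α) (T : Finset (Finset α)) :
    ncomp (insert σ T) ≤ ncomp T + 1 := by
  rw [ncomp_eq_ncard_image_hcomp, image_hcomp_insert]
  exact (Set.ncard_insert_le _ _).trans
    (Nat.add_le_add_right (ncard_image_hcomp_le_ncomp (subset_insert σ T)) 1)

lemma ncomp_insert_le_of_inter_nonempty {σ τ : Finset α} {T : Finset (Finset α)} (hτ : τ ∈ T)
    (hστ : (σ ∩ τ).Nonempty) : ncomp (insert σ T) ≤ ncomp T := by
  have hconn : hconnRel (insert σ T) σ τ :=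
    ReflTransGen.single ⟨mem_insert_self σ T, mem_insert_of_mem hτ, hστ⟩
  have hmem : hcomp (insert σ T) σ ∈ hcomp (insert σ T) '' (T : Set (Finset α)) :=
    ⟨τ, hτ, (hcomp_eq_of_hconnRel hconn).symm⟩
  rw [ncomp_eq_ncard_image_hcomp, image_hcomp_insert, Set.insert_eq_of_mem hmem]
  exact ncard_image_hcomp_le_ncomp (subset_insert σ T)

theorem stmt2 (ℓ k : ℕ) (hk : 2 ≤ k)
    (S : Finset (Finset (Fin ℓ)))
    (hcard : ∀ σ ∈ S, σ.card = k)
    -- F(σ) nonempty for every σ ∈ S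
    (hF : ∀ σ ∈ S, (σ \ (S.erase σ).sup id).Nonempty) :
    -- S is independent: removing any atom strictly decreases
    -- |⋃ T| − (number of connected components of T)
    ∀ σ ∈ S, ((((S.erase σ).sup id).card : ℤ) - ncomp (S.erase σ))
      < (((S.sup id).card : ℤ) - ncomp S) := by
  intro σ hσ
  set T := S.erase σ
  have hS : S = insert σ T := (insert_erase hσ).symm
  have hunion : (S.sup id).card = (σ \ T.sup id).card + (T.sup id).card := by
    rw [hS, sup_insert, id, sup_eq_union, ← card_sdiff_add_card]
  by_cases hdisj : Disjoint σ (T.sup id)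
  · have hcomps : ncomp S ≤ ncomp T + 1 := hS ▸ ncomp_insert_le σ T
    have hfree : (σ \ T.sup id).card = k := by rw [sdiff_eq_self_of_disjoint hdisj, hcard σ hσ]
    omega
  · obtain ⟨τ, hτ, hστ⟩ : ∃ τ ∈ T, ¬Disjoint σ τ := by
      simpa only [Finset.disjoint_sup_right, id, not_forall, exists_prop] using hdisj
    have hcomps : ncomp S ≤ ncomp T :=
      hS ▸ ncomp_insert_le_of_inter_nonempty hτ (not_disjoint_iff_nonempty_inter.mp hστ)
    have hfree : 0 < (σ \ T.sup id).card := (hF σ hσ).card_pos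
    omega
end

section
/- Let λ = {α_1 < ... < α_x} and γ be disjoint finite subsets of ℤ_{>0}, and let σ(α_i) denote the position (rank) of α_i in the increasingly ordered union λ ∪ γ. Then the parity of σ(α_i) + ε(λ∖{α_i}, γ) alternates as i increases: for each i, σ(α_{i+1}) + ε(λ∖{α_{i+1}}, γ) ≡ σ(α_i) + ε(λ∖{α_i}, γ) + 1 (mod 2). -/
/-- Inversion count `ε(A,B) = Σ_{a∈A} |{b ∈ B : b < a}|`. -/
def eps (A B : Finset ℕ) : ℕ := ∑ a ∈ A, (B.filter (· < a)).card

/-- The (1-based) rank of `a` in the increasingly ordered finite set `T`. -/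
def rankIn (T : Finset ℕ) (a : ℕ) : ℕ := (T.filter (· ≤ a)).card

/-
Proof idea: for `a ∈ λ` write `σ(a) = rank_λ(a) + |{b ∈ γ : b < a}|`, while removing `a` from `λ`
lowers `ε(λ, γ)` by exactly `|{b ∈ γ : b < a}|`. Hence `σ(a) + ε(λ∖{a}, γ) = rank_λ(a) + ε(λ, γ)`,
and `rank_λ(α_i) = i`, so the quantity increases by exactly one from `α_i` to `α_{i+1}`.
-/

open Finset

theorem Finset.card_filter_le_orderEmbOfFin {α : Type*} [LinearOrder α] (s : Finset α) {k : ℕ}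
    (h : s.card = k) (j : Fin k) : #{a ∈ s | a ≤ s.orderEmbOfFin h j} = j + 1 := by
  have hmap : {a ∈ s | a ≤ s.orderEmbOfFin h j} = (Iic j).map (s.orderEmbOfFin h).toEmbedding := by
    ext a
    simp only [mem_filter, mem_map, mem_Iic, RelEmbedding.coe_toEmbedding]
    constructor
    · rintro ⟨ha, hle⟩
      obtain ⟨m, rfl⟩ : a ∈ Set.range (s.orderEmbOfFin h) := by simpa using ha
      exact ⟨m, (s.orderEmbOfFin h).le_iff_le.mp hle, rfl⟩
    · rintro ⟨m, hm, rfl⟩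
      exact ⟨s.orderEmbOfFin_mem h m, (s.orderEmbOfFin h).le_iff_le.mpr hm⟩
  rw [hmap, card_map, Fin.card_Iic]

theorem rankIn_orderEmbOfFin (l : Finset ℕ) {k : ℕ} (h : l.card = k) (j : Fin k) :
    rankIn l (l.orderEmbOfFin h j) = j + 1 :=
  l.card_filter_le_orderEmbOfFin h j

theorem rankIn_union_of_mem {l g : Finset ℕ} (hd : Disjoint l g) {a : ℕ} (ha : a ∈ l) :
    rankIn (l ∪ g) a = rankIn l a + #{b ∈ g | b < a} := by
  have hg : {b ∈ g | b ≤ a} = {b ∈ g | b < a} :=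
    filter_congr fun b hb => by
      rw [le_iff_lt_or_eq, or_iff_left (ne_of_mem_of_not_mem hb (disjoint_left.mp hd ha))]
  rw [rankIn, filter_union, card_union_of_disjoint (disjoint_filter_filter hd), hg, rankIn]

theorem eps_erase_add {l : Finset ℕ} (g : Finset ℕ) {a : ℕ} (ha : a ∈ l) :
    eps (l.erase a) g + #{b ∈ g | b < a} = eps l g :=
  sum_erase_add _ _ ha

theorem rankIn_union_add_eps_erase {l g : Finset ℕ} (hd : Disjoint l g) {a : ℕ} (ha : a ∈ l) :
    rankIn (l ∪ g) a + eps (l.erase a) g = rankIn l a + eps l g := by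
  rw [rankIn_union_of_mem hd ha, ← eps_erase_add g ha]
  ring

theorem stmt8 (l g : Finset ℕ) (hd : Disjoint l g) (x : ℕ) (hx : l.card = x)
    (i : ℕ) (h1 : i < x) (h2 : i + 1 < x) :
    ∀ α : Fin x → ℕ, (∀ m, α m = (l.orderIsoOfFin hx m : ℕ)) →
    -- the parity of σ(α_i) + ε(λ∖{α_i}, γ) alternates as i increases
    (rankIn (l ∪ g) (α ⟨i + 1, h2⟩) + eps (l.erase (α ⟨i + 1, h2⟩)) g)
      ≡ (rankIn (l ∪ g) (α ⟨i, h1⟩) + eps (l.erase (α ⟨i, h1⟩)) g + 1) [MOD 2] := by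
  intro α hα
  simp only [hα, coe_orderIsoOfFin_apply]
  rw [rankIn_union_add_eps_erase hd (l.orderEmbOfFin_mem hx _),
    rankIn_union_add_eps_erase hd (l.orderEmbOfFin_mem hx _),
    rankIn_orderEmbOfFin, rankIn_orderEmbOfFin, add_right_comm]
end

section
/- The product on 𝔄_* defined by b_Λ · b_Γ = (−1)^{ε(∩Λ, ∩Γ)} b_{Λ⊎Γ} when Λ and Γ are compatible, and 0 otherwise, is associative. -/
/-- Generators of 𝔄_*: ordered collections Λ = (λ_1, ..., λ_r) of finite subsets of ℤ_{>0}. -/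
abbrev Gen := List (Finset ℕ)

/-- The vector space 𝔄_* spanned over ℚ by the generators `b_Λ`. -/
abbrev 𝔄 := Gen →₀ ℚ

/-- `⋃Λ`. -/
def unionAll (Λ : Gen) : Finset ℕ := Λ.foldr (· ∪ ·) ∅

/-- `⋂Λ` (with `⋂` of the empty collection taken to be `∅`). -/
def interAll : Gen → Finset ℕ
  | [] => ∅
  | a :: t => t.foldr (· ∩ ·) a

/-- Λ and Γ are compatible if one is empty, or they have the same number of elements and
`(⋃Λ) ∩ (⋃Γ) = ∅`. -/
def Compatible (Λ Γ : Gen) : Prop :=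
  Λ = [] ∨ Γ = [] ∨ (Λ.length = Γ.length ∧ Disjoint (unionAll Λ) (unionAll Γ))

/-- `Λ ⊎ Γ = (λ_1 ∪ γ_1, ..., λ_r ∪ γ_r)`. -/
def uplus : Gen → Gen → Gen
  | [], Γ => Γ
  | Λ, [] => Λ
  | Λ, Γ => List.zipWith (· ∪ ·) Λ Γ

-- The product on generators: `b_Λ b_Γ = (−1)^{ε(∩Λ,∩Γ)} b_{Λ⊎Γ}` if Λ and Γ are
-- compatible, and `0` otherwise.
open Classical in
noncomputable def mulGen (Λ Γ : Gen) : 𝔄 :=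
  if Compatible Λ Γ then
    ((-1 : ℚ) ^ eps (interAll Λ) (interAll Γ)) • Finsupp.single (uplus Λ Γ) 1
  else 0

/-- The bilinear extension of the product to 𝔄_*. -/
noncomputable def mulA : 𝔄 →ₗ[ℚ] 𝔄 →ₗ[ℚ] 𝔄 :=
  Finsupp.lift (𝔄 →ₗ[ℚ] 𝔄) ℚ Gen fun Λ => Finsupp.lift 𝔄 ℚ Gen fun Γ => mulGen Λ Γ

/-- The simplicial differential `δ(b_Λ) = Σ_i (−1)^i b_{(∩Λ ∖ α_i, Λ̂)}`: removing
`α ∈ ⋂Λ` from the intersection replaces each `λ_j` by `λ_j ∖ {α}`. -/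
noncomputable def deltaA : 𝔄 →ₗ[ℚ] 𝔄 :=
  Finsupp.lift 𝔄 ℚ Gen fun Λ =>
    ∑ α ∈ interAll Λ,
      ((-1 : ℚ) ^ rankIn (interAll Λ) α) • Finsupp.single (Λ.map (·.erase α)) 1

/-!
On compatible pairs, `⋂(Λ ⊎ Γ) = ⋂Λ ∪ ⋂Γ` (a disjoint union), and `Λ ⊎ Γ` is compatible with `Θ`
exactly when both `Λ` and `Γ` are. Hence both `(b_Λ b_Γ) b_Θ` and `b_Λ (b_Γ b_Θ)` vanish unless
`Λ, Γ, Θ` are pairwise compatible, and otherwise both equal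
`(-1)^(ε(⋂Λ,⋂Γ) + ε(⋂Λ,⋂Θ) + ε(⋂Γ,⋂Θ)) b_{Λ⊎Γ⊎Θ}`, because `ε` is additive in each argument over
disjoint unions. Associativity on generators extends to `𝔄_*` by trilinearity.
-/

lemma uplus_nil_left (Γ : Gen) : uplus [] Γ = Γ := by cases Γ <;> rfl

lemma uplus_nil_right (Λ : Gen) : uplus Λ [] = Λ := by cases Λ <;> rfl

lemma uplus_eq_nil_iff {Λ Γ : Gen} : uplus Λ Γ = [] ↔ Λ = [] ∧ Γ = [] := by
  cases Λ <;> cases Γ <;> simp [uplus]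

lemma uplus_of_length_eq {Λ Γ : Gen} (h : Λ.length = Γ.length) :
    uplus Λ Γ = List.zipWith (· ∪ ·) Λ Γ := by
  cases Λ <;> cases Γ <;> simp_all [uplus]

lemma uplus_assoc (Λ Γ Θ : Gen) : uplus (uplus Λ Γ) Θ = uplus Λ (uplus Γ Θ) := by
  rcases Λ with _ | ⟨a, t⟩ <;> rcases Γ with _ | ⟨b, s⟩ <;> rcases Θ with _ | ⟨c, u⟩ <;>
    simp only [uplus, List.zipWith_cons_cons, List.zipWith_zipWith_left,
      List.zipWith_zipWith_right, Finset.union_assoc]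

lemma unionAll_nil : unionAll [] = ∅ := rfl

lemma interAll_nil : interAll [] = ∅ := rfl

lemma mem_unionAll {L : Gen} {x : ℕ} : x ∈ unionAll L ↔ ∃ s ∈ L, x ∈ s := by
  induction L with
  | nil => simp [unionAll]
  | cons a t ih => simp [unionAll, ← ih]

lemma mem_interAll {L : Gen} {x : ℕ} : x ∈ interAll L ↔ L ≠ [] ∧ ∀ s ∈ L, x ∈ s := by
  rcases L with _ | ⟨a, t⟩
  · simp [interAll]
  induction t with
  | nil => simp [interAll]
  | cons b t ih =>
    simp only [interAll, List.foldr_cons, Finset.mem_inter] at ih ⊢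
    simp only [ih, ne_eq, reduceCtorEq, not_false_eq_true, true_and, List.forall_mem_cons]
    tauto

lemma unionAll_zipWith_union {Λ Γ : Gen} (h : Λ.length = Γ.length) :
    unionAll (List.zipWith (· ∪ ·) Λ Γ) = unionAll Λ ∪ unionAll Γ := by
  induction Λ generalizing Γ with
  | nil => cases Γ <;> simp_all [unionAll]
  | cons a t ih =>
    cases Γ with
    | nil => simp at h
    | cons b s =>
      simp only [List.length_cons, add_left_inj] at h
      simp only [List.zipWith_cons_cons, unionAll, List.foldr_cons] at ih ⊢
      rw [ih h]
      ac_rfl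

lemma interAll_zipWith_union {Λ Γ : Gen} (h : Λ.length = Γ.length)
    (hd : Disjoint (unionAll Λ) (unionAll Γ)) :
    interAll (List.zipWith (· ∪ ·) Λ Γ) = interAll Λ ∪ interAll Γ := by
  rcases eq_or_ne Γ [] with rfl | hΓ
  · simp_all [interAll_nil]
  have hΛ : Λ ≠ [] := fun hΛ => hΓ (List.length_eq_zero_iff.1 (hΛ ▸ h).symm)
  ext x
  simp only [Finset.mem_union, mem_interAll, List.forall_mem_iff_getElem, List.length_zipWith,
    List.getElem_zipWith, List.zipWith_eq_nil_iff, hΛ, hΓ, or_self, ne_eq, not_false_eq_true,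
    true_and]
  refine ⟨fun H => ?_, fun H i hi => H.imp (fun H => H i (by omega)) (fun H => H i (by omega))⟩
  -- By disjointness, `x` lies in members of at most one of `Λ` and `Γ`.
  by_cases hx : x ∈ unionAll Γ
  · refine Or.inr fun i hi => (H i (by omega)).resolve_left fun hxi => ?_
    exact Finset.disjoint_left.1 hd (mem_unionAll.2 ⟨_, List.getElem_mem _, hxi⟩) hx
  · exact Or.inl fun i hi => (H i (by omega)).resolve_right fun hxi =>
      hx (mem_unionAll.2 ⟨_, List.getElem_mem _, hxi⟩)

lemma interAll_subset_unionAll {L : Gen} : interAll L ⊆ unionAll L := by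
  intro x hx
  obtain ⟨hL, hmem⟩ := mem_interAll.1 hx
  obtain ⟨s, hs⟩ := List.exists_mem_of_ne_nil L hL
  exact mem_unionAll.2 ⟨s, hs, hmem s hs⟩

lemma compatible_iff_of_ne_nil {Λ Γ : Gen} (hΛ : Λ ≠ []) (hΓ : Γ ≠ []) :
    Compatible Λ Γ ↔ Λ.length = Γ.length ∧ Disjoint (unionAll Λ) (unionAll Γ) := by
  simp [Compatible, hΛ, hΓ]

lemma compatible_nil_left (Γ : Gen) : Compatible [] Γ := Or.inl rfl

lemma compatible_nil_right (Λ : Gen) : Compatible Λ [] := Or.inr (Or.inl rfl)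

lemma compatible_comm (Λ Γ : Gen) : Compatible Λ Γ ↔ Compatible Γ Λ := by
  unfold Compatible
  rw [eq_comm (a := Λ.length), disjoint_comm]
  tauto

namespace Compatible

variable {Λ Γ : Gen}

lemma unionAll_uplus (h : Compatible Λ Γ) :
    unionAll (uplus Λ Γ) = unionAll Λ ∪ unionAll Γ := by
  rcases h with rfl | rfl | ⟨hlen, -⟩
  · simp [uplus_nil_left, unionAll_nil]
  · simp [uplus_nil_right, unionAll_nil]
  · rw [uplus_of_length_eq hlen, unionAll_zipWith_union hlen]

lemma interAll_uplus (h : Compatible Λ Γ) :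
    interAll (uplus Λ Γ) = interAll Λ ∪ interAll Γ := by
  rcases h with rfl | rfl | ⟨hlen, hd⟩
  · simp [uplus_nil_left, interAll_nil]
  · simp [uplus_nil_right, interAll_nil]
  · rw [uplus_of_length_eq hlen, interAll_zipWith_union hlen hd]

lemma disjoint_interAll (h : Compatible Λ Γ) : Disjoint (interAll Λ) (interAll Γ) := by
  rcases h with rfl | rfl | ⟨-, hd⟩
  · simp [interAll_nil]
  · simp [interAll_nil]
  · exact hd.mono interAll_subset_unionAll interAll_subset_unionAll

lemma compatible_uplus_left_iff {Θ : Gen} (h : Compatible Λ Γ) :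
    Compatible (uplus Λ Γ) Θ ↔ Compatible Λ Θ ∧ Compatible Γ Θ := by
  rcases eq_or_ne Λ [] with rfl | hΛ
  · simp [uplus_nil_left, compatible_nil_left]
  rcases eq_or_ne Γ [] with rfl | hΓ
  · simp [uplus_nil_right, compatible_nil_left]
  rcases eq_or_ne Θ [] with rfl | hΘ
  · simp [compatible_nil_right]
  have hlen := ((compatible_iff_of_ne_nil hΛ hΓ).1 h).1
  rw [compatible_iff_of_ne_nil (by simp [uplus_eq_nil_iff, hΛ]) hΘ, compatible_iff_of_ne_nil hΛ hΘ,
    compatible_iff_of_ne_nil hΓ hΘ, h.unionAll_uplus, uplus_of_length_eq hlen, List.length_zipWith,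
    hlen, min_self, Finset.disjoint_union_left]
  tauto

lemma compatible_uplus_right_iff {Θ : Gen} (h : Compatible Γ Θ) :
    Compatible Λ (uplus Γ Θ) ↔ Compatible Λ Γ ∧ Compatible Λ Θ := by
  simp only [compatible_comm Λ, h.compatible_uplus_left_iff]

end Compatible

lemma eps_union_left {A B : Finset ℕ} (C : Finset ℕ) (h : Disjoint A B) :
    eps (A ∪ B) C = eps A C + eps B C := by
  simp [eps, Finset.sum_union h]

lemma eps_union_right (A : Finset ℕ) {B C : Finset ℕ} (h : Disjoint B C) :
    eps A (B ∪ C) = eps A B + eps A C := by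
  simp only [eps, Finset.filter_union, ← Finset.sum_add_distrib]
  exact Finset.sum_congr rfl fun a _ =>
    Finset.card_union_of_disjoint (h.mono (Finset.filter_subset _ _) (Finset.filter_subset _ _))

open Classical in
noncomputable def mulGen₃ (Λ Γ Θ : Gen) : 𝔄 :=
  if Compatible Λ Γ ∧ Compatible Λ Θ ∧ Compatible Γ Θ then
    ((-1 : ℚ) ^ (eps (interAll Λ) (interAll Γ) + eps (interAll Λ) (interAll Θ) +
      eps (interAll Γ) (interAll Θ))) • Finsupp.single (uplus (uplus Λ Γ) Θ) 1
  else 0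

lemma mulA_single_single (Λ Γ : Gen) :
    mulA (Finsupp.single Λ 1) (Finsupp.single Γ 1) = mulGen Λ Γ := by
  simp [mulA]

lemma mulA_mulGen_single (Λ Γ Θ : Gen) :
    mulA (mulGen Λ Γ) (Finsupp.single Θ 1) = mulGen₃ Λ Γ Θ := by
  by_cases h : Compatible Λ Γ
  · rw [mulGen, if_pos h, map_smul, LinearMap.smul_apply, mulA_single_single, mulGen, mulGen₃,
      h.compatible_uplus_left_iff, h.interAll_uplus, eps_union_left _ h.disjoint_interAll]
    split_ifs with hΘ hΛΓΘ hΛΓΘ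
    · rw [smul_smul, ← pow_add, add_assoc]
    · exact absurd ⟨h, hΘ⟩ hΛΓΘ
    · exact absurd hΛΓΘ.2 hΘ
    · rw [smul_zero]
  · simp [mulGen, mulGen₃, h]

lemma mulA_single_mulGen (Λ Γ Θ : Gen) :
    mulA (Finsupp.single Λ 1) (mulGen Γ Θ) = mulGen₃ Λ Γ Θ := by
  by_cases h : Compatible Γ Θ
  · rw [mulGen, if_pos h, map_smul, mulA_single_single, mulGen, mulGen₃,
      h.compatible_uplus_right_iff, h.interAll_uplus, eps_union_right _ h.disjoint_interAll,
      uplus_assoc]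
    split_ifs with hΛ hΛΓΘ hΛΓΘ
    · rw [smul_smul, ← pow_add, add_comm]
    · exact absurd ⟨hΛ.1, hΛ.2, h⟩ hΛΓΘ
    · exact absurd ⟨hΛΓΘ.1, hΛΓΘ.2.1⟩ hΛ
    · rw [smul_zero]
  · simp [mulGen, mulGen₃, h]

lemma Finsupp.bilinear_assoc_of_single {R ι : Type*} [CommSemiring R]
    (μ : (ι →₀ R) →ₗ[R] (ι →₀ R) →ₗ[R] ι →₀ R)
    (h : ∀ i j k, μ (μ (single i 1) (single j 1)) (single k 1) =
      μ (single i 1) (μ (single j 1) (single k 1)))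
    (x y z : ι →₀ R) : μ (μ x y) z = μ x (μ y z) := by
  have : μ.compr₂ μ = (LinearMap.llcomp R _ _ _ ∘ₗ μ).compl₂ μ := by
    ext i j k a
    simpa using DFunLike.congr_fun (h i j k) a
  exact LinearMap.congr_fun (LinearMap.congr_fun₂ this x y) z

/-- The product on 𝔄_* is associative. -/
theorem stmt11 (x y z : 𝔄) : mulA (mulA x y) z = mulA x (mulA y z) :=
  Finsupp.bilinear_assoc_of_single mulA (fun Λ Γ Θ => by
    rw [mulA_single_single, mulA_single_single, mulA_mulGen_single, mulA_single_mulGen]) x y z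
end

section
/- Suppose Λ and Γ are collections of subsets of ℤ_{>0} with |Λ| = |Γ|, the product b_Λ b_Γ = 0 because (⋃Λ) ∩ (⋃Γ) ≠ ∅, but (⋃Λ) ∩ (⋃Γ) ⊆ (∩Λ) ∩ (∩Γ) and |(∩Λ) ∩ (∩Γ)| = 1, say equal to {p}. If p = α_i is the i-th smallest element of ∩Λ and p = β_j is the j-th smallest element of ∩Γ, then the two potentially nonzero terms in δ(b_Λ)b_Γ + (−1)^{|∩Λ|} b_Λ δ(b_Γ) cancel: (−1)^{i + ε(∩Λ∖{p}, ∩Γ)} + (−1)^{|∩Λ| + j + ε(∩Λ, ∩Γ∖{p})} = 0. -/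
/-- When the product vanishes because the unions meet in the single common intersection
point `p`, the two potentially nonzero terms of the Leibniz expansion cancel. -/
theorem stmt15 (Λ Γ : Gen) (p : ℕ)
    (hlen : Λ.length = Γ.length)
    (hover : (unionAll Λ ∩ unionAll Γ).Nonempty)
    (hsub : unionAll Λ ∩ unionAll Γ ⊆ interAll Λ ∩ interAll Γ)
    (hsingle : interAll Λ ∩ interAll Γ = {p}) :
    -- with i = rank of p in ∩Λ, j = rank of p in ∩Γ, x = |∩Λ|:
    -- (−1)^{i + ε(∩Λ∖{p}, ∩Γ)} + (−1)^{x + j + ε(∩Λ, ∩Γ∖{p})} = 0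
    ((-1 : ℚ) ^ (rankIn (interAll Λ) p + eps ((interAll Λ).erase p) (interAll Γ)))
      + ((-1 : ℚ) ^ ((interAll Λ).card + rankIn (interAll Γ) p
          + eps (interAll Λ) ((interAll Γ).erase p))) = 0 := by
  set A := interAll Λ with hA
  set B := interAll Γ with hB
  have hpAB : p ∈ A ∩ B := by rw [hsingle]; exact Finset.mem_singleton_self p
  have hpA : p ∈ A := (Finset.mem_inter.mp hpAB).1
  have hpB : p ∈ B := (Finset.mem_inter.mp hpAB).2
  set c1 := (B.filter (· < p)).card with hc1
  set c2 := (A.filter (p < ·)).card with hc2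
  have h1 : eps (A.erase p) B + c1 = eps A B := by
    unfold eps
    exact Finset.sum_erase_add A _ hpA
  have hj : rankIn B p = c1 + 1 := by
    unfold rankIn
    have hset : B.filter (· ≤ p) = insert p (B.filter (· < p)) := by
      ext b
      simp only [Finset.mem_filter, Finset.mem_insert]
      constructor
      · rintro ⟨hb, hle⟩
        rcases lt_or_eq_of_le hle with h | h
        · exact Or.inr ⟨hb, h⟩
        · exact Or.inl h
      · rintro (rfl | ⟨hb, hlt⟩)
        · exact ⟨hpB, le_refl _⟩
        · exact ⟨hb, le_of_lt hlt⟩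
    rw [hset, Finset.card_insert_of_notMem (by simp)]
  have hi : rankIn A p + c2 = A.card := by
    unfold rankIn
    rw [hc2]
    have := Finset.card_filter_add_card_filter_not (s := A) (p := (· ≤ p))
    simpa [not_le] using this
  have h2 : eps A (B.erase p) + c2 = eps A B := by
    unfold eps
    rw [hc2, Finset.card_filter, ← Finset.sum_add_distrib]
    apply Finset.sum_congr rfl
    intro a _
    by_cases h : p < a
    · rw [Finset.filter_erase, if_pos h]
      exact Finset.card_erase_add_one (Finset.mem_filter.mpr ⟨hpB, h⟩)
    · rw [if_neg h, add_zero, Finset.filter_erase,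
        Finset.erase_eq_of_notMem (by simp [h])]
  have key : A.card + rankIn B p + eps A (B.erase p)
      = (rankIn A p + eps (A.erase p) B) + (2 * c1 + 1) := by omega
  rw [key, pow_add, pow_add]
  have hm1 : ((-1 : ℚ)) ^ (2 * c1 + 1) = -1 := by
    rw [pow_succ, pow_mul]; norm_num
  rw [hm1]; ring
end

section
/- The Leibniz rule for δ fails in general: for Λ = {{1,2},{1,3}} and Γ = {{2,4},{2,5}}, the product b_Λ b_Γ = 0 (since (⋃Λ)∩(⋃Γ) = {2} is not contained in (∩Λ)∩(∩Γ)), so δ(b_Λ b_Γ) = 0, but δ(b_Λ)b_Γ + (−1)^{|∩Λ|} b_Λ δ(b_Γ) = b_{{{1,2,4},{1,3,5}}} ≠ 0. -/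
lemma mulGen_of_compatible {Λ Γ : Gen} (h : Compatible Λ Γ) :
    mulGen Λ Γ =
      ((-1 : ℚ) ^ eps (interAll Λ) (interAll Γ)) • Finsupp.single (uplus Λ Γ) 1 :=
  if_pos h

lemma mulGen_of_not_disjoint {Λ Γ : Gen} (h : ¬Disjoint (unionAll Λ) (unionAll Γ)) :
    mulGen Λ Γ = 0 := by
  refine if_neg ?_
  rintro (rfl | rfl | ⟨-, hdisj⟩)
  · exact h (by simp [unionAll])
  · exact h (by simp [unionAll])
  · exact h hdisj

lemma deltaA_single_of_interAll_eq_singleton {Λ : Gen} {α : ℕ} (h : interAll Λ = {α}) :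
    deltaA (Finsupp.single Λ 1) = -Finsupp.single (Λ.map (·.erase α)) 1 := by
  simp [deltaA, Finsupp.lift_apply, Finsupp.sum_single_index, h, rankIn, Finset.filter_singleton,
    ← Finsupp.single_neg]

/-- The Leibniz rule fails for `Λ = {{1,2},{1,3}}` and `Γ = {{2,4},{2,5}}`. -/
theorem stmt16 :
    mulA (Finsupp.single ([{1,2},{1,3}] : Gen) 1)
        (Finsupp.single ([{2,4},{2,5}] : Gen) 1) = 0 ∧
    mulA (deltaA (Finsupp.single ([{1,2},{1,3}] : Gen) 1))
        (Finsupp.single ([{2,4},{2,5}] : Gen) 1)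
      + ((-1 : ℚ) ^ (interAll [{1,2},{1,3}]).card) •
          mulA (Finsupp.single ([{1,2},{1,3}] : Gen) 1)
            (deltaA (Finsupp.single ([{2,4},{2,5}] : Gen) 1))
      = Finsupp.single ([{1,2,4},{1,3,5}] : Gen) 1 ∧
    (Finsupp.single ([{1,2,4},{1,3,5}] : Gen) (1 : ℚ)) ≠ 0 := by
  have hΛ : interAll [{1,2},{1,3}] = {1} := by decide
  have hΓ : interAll [{2,4},{2,5}] = {2} := by decide
  have hΛΓ : mulGen [{1,2},{1,3}] [{2,4},{2,5}] = 0 := mulGen_of_not_disjoint (by decide)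
  have hδΛΓ : mulGen [{2},{3}] [{2,4},{2,5}] = 0 := mulGen_of_not_disjoint (by decide)
  have hΛδΓ : mulGen [{1,2},{1,3}] [{4},{5}] = Finsupp.single [{1,2,4},{1,3,5}] 1 := by
    have hcompat : Compatible [{1,2},{1,3}] [{4},{5}] := .inr (.inr ⟨rfl, by decide⟩)
    rw [mulGen_of_compatible hcompat]
    have heps : eps (interAll [{1,2},{1,3}]) (interAll [{4},{5}]) = 0 := by decide
    have huplus : uplus [{1,2},{1,3}] [{4},{5}] = [{1,2,4},{1,3,5}] := by decide
    rw [heps, huplus, pow_zero, one_smul]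
  refine ⟨by rw [mulA_single_single, hΛΓ], ?_, by simp⟩
  rw [deltaA_single_of_interAll_eq_singleton hΛ, deltaA_single_of_interAll_eq_singleton hΓ, hΛ]
  simp [mulA_single_single, hδΛΓ, hΛδΓ]
end
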